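/- Let u ≤ w in Bruhat order on S_n, let (s_{i_1}, ..., s_{i_a}) be a reduced word for w, and let (s_{j_1}, ..., s_{j_b}) be a reduced word for u^{-1} w_0, where w_0 is the longest element of S_n. Then the Demazure product s_{i_1} * ... * s_{i_a} * s_{j_1} * ... * s_{j_b} equals w_0. -/

import Mathlib

/-- The simple transposition `s_{i+1}` (1-indexed) in `S_{n+1}`. -/
def sgen {n : ℕ} (i : Fin n) : Equiv.Perm (Fin (n + 1)) :=
  Equiv.swap i.castSucc i.succ

/-- Coxeter length of a permutation, as the number of inversions. -/
def len {n : ℕ} (w : Equiv.Perm (Fin n)) : ℕ :=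
  (Finset.univ.filter fun p : Fin n × Fin n => p.1 < p.2 ∧ w p.2 < w p.1).card

/-- Product of the word of simple transpositions indexed by `l`. -/
def wordProd {n : ℕ} (l : List (Fin n)) : Equiv.Perm (Fin (n + 1)) :=
  (l.map sgen).prod

/-- `l` is a reduced word for `w`. -/
def IsReducedWord {n : ℕ} (l : List (Fin n)) (w : Equiv.Perm (Fin (n + 1))) : Prop :=
  wordProd l = w ∧ l.length = len w

/-- The Demazure product of a word of simple transpositions. -/
def demazure {n : ℕ} : List (Fin n) → Equiv.Perm (Fin (n + 1))
  | [] => 1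
  | i :: rest =>
    if len (sgen i * demazure rest) > len (demazure rest) then sgen i * demazure rest
    else demazure rest

/-- Bruhat order on `S_n`, via the rank-matrix characterization. -/
def BruhatLE {n : ℕ} (u v : Equiv.Perm (Fin n)) : Prop :=
  ∀ i j : ℕ,
    (Finset.univ.filter fun a : Fin n => (a : ℕ) < j ∧ ((v a : ℕ)) < i).card ≤
    (Finset.univ.filter fun a : Fin n => (a : ℕ) < j ∧ ((u a : ℕ)) < i).card

/-- The longest element `w₀` of `S_{n+1}`, `w₀(j) = n + 1 - j`. -/
def longest (n : ℕ) : Equiv.Perm (Fin (n + 1)) :=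
  ⟨Fin.rev, Fin.rev, Fin.rev_rev, Fin.rev_rev⟩

/-!
If `demazure m = x⁻¹ * w₀`, then `demazure (i :: m) = x'⁻¹ * w₀`, where `x' = x * s_i` when `i` is
a right descent of `x` and `x' = x` otherwise; this is because `len (y⁻¹ * w₀) + len y` does not
depend on `y`. Reading the word for `w` from the right, starting from `x = u`, the lifting property
of Bruhat order (`x ≤ v * s_i` implies `x' ≤ v`) keeps `x'` below the part of the word not yet
read. Once the word is used up, `x ≤ 1`, so `x = 1` and the Demazure product is `w₀`.
-/

section SimpleTransposition

open Equiv

variable {n : ℕ}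

lemma sgen_apply_castSucc (k : Fin n) : sgen k k.castSucc = k.succ := swap_apply_left _ _

lemma sgen_apply_succ (k : Fin n) : sgen k k.succ = k.castSucc := swap_apply_right _ _

lemma sgen_sgen (k : Fin n) (a : Fin (n + 1)) : sgen k (sgen k a) = a := swap_apply_self _ _ _

lemma sgen_mul_self (k : Fin n) : sgen k * sgen k = 1 := swap_mul_self _ _

lemma sgen_inv (k : Fin n) : (sgen k)⁻¹ = sgen k := swap_inv _ _

lemma mul_sgen_apply_castSucc (x : Perm (Fin (n + 1))) (k : Fin n) :
    (x * sgen k) k.castSucc = x k.succ :=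
  congrArg x (sgen_apply_castSucc k)

lemma mul_sgen_apply_succ (x : Perm (Fin (n + 1))) (k : Fin n) :
    (x * sgen k) k.succ = x k.castSucc :=
  congrArg x (sgen_apply_succ k)

lemma apply_castSucc_ne_apply_succ {α : Type*} (x : Fin (n + 1) ≃ α) (k : Fin n) :
    x k.castSucc ≠ x k.succ :=
  x.injective.ne Fin.castSucc_lt_succ.ne

lemma sgen_lt_sgen_iff (k : Fin n) {a b : Fin (n + 1)}
    (h₁ : ¬(a = k.castSucc ∧ b = k.succ)) (h₂ : ¬(a = k.succ ∧ b = k.castSucc)) :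
    sgen k a < sgen k b ↔ a < b := by
  simp only [sgen, swap_apply_def, Fin.ext_iff, Fin.lt_def, Fin.val_castSucc, Fin.val_succ] at *
  split_ifs <;> simp_all <;> omega

lemma val_sgen_lt_iff (k : Fin n) {j : ℕ} (hj : j ≠ k + 1) (a : Fin (n + 1)) :
    (sgen k a : ℕ) < j ↔ (a : ℕ) < j := by
  simp only [sgen, swap_apply_def]
  split_ifs <;> simp_all [Fin.ext_iff] <;> omega

end SimpleTransposition

section Length

open Finset Equiv

variable {n : ℕ}

lemma len_inv {m : ℕ} (x : Perm (Fin m)) : len x⁻¹ = len x := by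
  apply card_equiv ((prodComm _ _).trans (prodCongr x⁻¹ x⁻¹))
  intro p
  simp only [mem_filter, mem_univ, true_and, trans_apply, prodComm_apply, Prod.swap,
    prodCongr_apply, Prod.map, Perm.coe_inv, apply_symm_apply]
  exact and_comm

lemma len_mul_sgen_of_lt (x : Perm (Fin (n + 1))) (k : Fin n)
    (h : x k.castSucc < x k.succ) : len (x * sgen k) = len x + 1 := by
  have hmem : (k.castSucc, k.succ) ∈
      univ.filter fun p : Fin (n + 1) × Fin (n + 1) =>
        p.1 < p.2 ∧ (x * sgen k) p.2 < (x * sgen k) p.1 := by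
    simp only [mem_filter, mem_univ, true_and]
    exact ⟨Fin.castSucc_lt_succ, by rwa [mul_sgen_apply_castSucc, mul_sgen_apply_succ]⟩
  rw [len, len, ← card_erase_add_one hmem, add_left_inj]
  -- `sgen k × sgen k` maps the inversions of `x` onto those of `x * sgen k` except `(k, k + 1)`.
  symm
  apply card_equiv ((sgen k).prodCongr (sgen k))
  rintro ⟨a, b⟩
  simp only [mem_erase, mem_filter, mem_univ, true_and, prodCongr_apply, Prod.map, ne_eq,
    Prod.mk.injEq]
  simp only [Perm.mul_apply, sgen_sgen]
  by_cases h₁ : a = k.castSucc ∧ b = k.succ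
  · obtain ⟨rfl, rfl⟩ := h₁
    simp [sgen_apply_castSucc, sgen_apply_succ, h.not_gt]
  by_cases h₂ : a = k.succ ∧ b = k.castSucc
  · obtain ⟨rfl, rfl⟩ := h₂
    simp [sgen_apply_castSucc, sgen_apply_succ, Fin.castSucc_lt_succ.not_gt]
  have h₃ : ¬(sgen k a = k.castSucc ∧ sgen k b = k.succ) := fun ⟨ha, hb⟩ =>
    h₂ ⟨by rw [← sgen_sgen k a, ha, sgen_apply_castSucc],
      by rw [← sgen_sgen k b, hb, sgen_apply_succ]⟩
  simp [sgen_lt_sgen_iff k h₁ h₂, h₃]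

lemma len_mul_sgen_of_gt (x : Perm (Fin (n + 1))) (k : Fin n)
    (h : x k.succ < x k.castSucc) : len (x * sgen k) + 1 = len x := by
  have h' : (x * sgen k) k.castSucc < (x * sgen k) k.succ := by
    rwa [mul_sgen_apply_castSucc, mul_sgen_apply_succ]
  rw [← len_mul_sgen_of_lt _ k h', mul_assoc, sgen_mul_self, mul_one]

lemma len_mul_sgen_lt_iff (x : Perm (Fin (n + 1))) (k : Fin n) :
    len (x * sgen k) < len x ↔ x k.succ < x k.castSucc := by
  rcases (apply_castSucc_ne_apply_succ x k).lt_or_gt with h | h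
  · simp [len_mul_sgen_of_lt x k h, h.not_gt]
  · simp [← len_mul_sgen_of_gt x k h, h]

lemma len_mul_sgen_le (x : Perm (Fin (n + 1))) (k : Fin n) :
    len (x * sgen k) ≤ len x + 1 := by
  rcases (apply_castSucc_ne_apply_succ x k).lt_or_gt with h | h
  · exact (len_mul_sgen_of_lt x k h).le
  · have := len_mul_sgen_of_gt x k h
    omega

lemma len_sgen_mul_le (x : Perm (Fin (n + 1))) (k : Fin n) :
    len (sgen k * x) ≤ len x + 1 := by
  rw [← len_inv, mul_inv_rev, sgen_inv, ← len_inv x]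
  exact len_mul_sgen_le x⁻¹ k

lemma len_inv_mul_longest_add_len (x : Perm (Fin (n + 1))) :
    len (x⁻¹ * longest n) + len x =
      #(univ.filter fun p : Fin (n + 1) × Fin (n + 1) => p.1 < p.2) := by
  rw [← len_inv (x⁻¹ * longest n), mul_inv_rev, inv_inv,
    ← card_filter_add_card_filter_not (fun p => x p.1 < x p.2)]
  simp only [len, filter_filter]
  congr 2
  · ext p
    simp [longest, Fin.rev_lt_rev]
  · ext ⟨a, b⟩
    simp only [mem_filter, mem_univ, true_and, not_lt, and_congr_right_iff]
    exact fun hab => ⟨le_of_lt, fun h => h.lt_of_ne (x.injective.ne hab.ne')⟩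

end Length

section Bruhat

open Finset Equiv

variable {m : ℕ}

def permRank (v : Perm (Fin m)) (i j : ℕ) : ℕ :=
  #(univ.filter fun a : Fin m => (a : ℕ) < j ∧ (v a : ℕ) < i)

lemma bruhatLE_iff {u v : Perm (Fin m)} :
    BruhatLE u v ↔ ∀ i j, permRank v i j ≤ permRank u i j :=
  Iff.rfl

lemma BruhatLE.trans {u v w : Perm (Fin m)} (h₁ : BruhatLE u v) (h₂ : BruhatLE v w) :
    BruhatLE u w :=
  fun i j => (h₂ i j).trans (h₁ i j)

lemma permRank_succ (v : Perm (Fin m)) (i : ℕ) (a : Fin m) :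
    permRank v i (a + 1) = permRank v i a + if (v a : ℕ) < i then 1 else 0 := by
  unfold permRank
  split_ifs with h
  · rw [← card_insert_of_notMem (s := univ.filter fun b : Fin m => (b : ℕ) < a ∧ (v b : ℕ) < i)
      (a := a) (by simp)]
    congr 1
    ext b
    simp only [mem_insert, mem_filter, mem_univ, true_and]
    rcases eq_or_ne b a with rfl | hb
    · simp [h]
    · have := Fin.val_ne_of_ne hb
      simp only [hb, false_or]
      omega
  · rw [add_zero]
    congr 1
    ext b
    simp only [mem_filter, mem_univ, true_and]
    rcases eq_or_ne b a with rfl | hb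
    · simp [h]
    · have := Fin.val_ne_of_ne hb
      omega

lemma permRank_mul_of_forall_lt_iff (v σ : Perm (Fin m)) {j : ℕ}
    (hσ : ∀ a, (σ a : ℕ) < j ↔ (a : ℕ) < j) (i : ℕ) : permRank (v * σ) i j = permRank v i j := by
  apply card_equiv σ
  intro a
  simp only [mem_filter, mem_univ, true_and]
  rw [Perm.mul_apply, hσ]

lemma eq_one_of_bruhatLE_one {x : Perm (Fin m)} (h : BruhatLE x 1) : x = 1 := by
  have hle : ∀ a, (x a : ℕ) ≤ a := by
    intro a
    have hsub : univ.filter (fun b : Fin m => (b : ℕ) < a + 1 ∧ (x b : ℕ) < a + 1) ⊆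
        univ.filter (fun b : Fin m => (b : ℕ) < a + 1 ∧ (b : ℕ) < a + 1) := by
      intro b
      simp only [mem_filter, mem_univ, true_and]
      exact fun hb => ⟨hb.1, hb.1⟩
    have ha : a ∈ univ.filter (fun b : Fin m => (b : ℕ) < a + 1 ∧ (x b : ℕ) < a + 1) := by
      rw [eq_of_subset_of_card_le hsub (h (a + 1) (a + 1))]
      simp
    simp only [mem_filter] at ha
    omega
  have hsum : ∑ a, (x a : ℕ) = ∑ a : Fin m, (a : ℕ) := Equiv.sum_comp x fun a => (a : ℕ)
  ext a
  exact (sum_eq_sum_iff_of_le fun a _ => hle a).1 hsum a (mem_univ a)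

variable {n : ℕ}

lemma permRank_mul_sgen_of_ne (v : Perm (Fin (n + 1))) (k : Fin n) {j : ℕ} (hj : j ≠ k + 1)
    (i : ℕ) : permRank (v * sgen k) i j = permRank v i j :=
  permRank_mul_of_forall_lt_iff v (sgen k) (val_sgen_lt_iff k hj) i

lemma bruhatLE_mul_sgen_of_gt {u : Perm (Fin (n + 1))} {k : Fin n}
    (hu : u k.succ < u k.castSucc) : BruhatLE (u * sgen k) u := by
  rw [bruhatLE_iff]
  intro i j
  rcases eq_or_ne j (k + 1) with rfl | hj
  · have h₀ := permRank_mul_sgen_of_ne u k (j := k) (by omega) i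
    have h₁ := permRank_succ u i k.castSucc
    have h₂ := permRank_succ (u * sgen k) i k.castSucc
    rw [Fin.val_castSucc] at h₁ h₂
    rw [mul_sgen_apply_castSucc] at h₂
    rw [Fin.lt_def] at hu
    split_ifs at h₁ h₂ <;> omega
  · exact (permRank_mul_sgen_of_ne u k hj i).ge

lemma BruhatLE.of_bruhatLE_mul_sgen {x w : Perm (Fin (n + 1))} {k : Fin n}
    (hx : x k.castSucc < x k.succ) (h : BruhatLE x (w * sgen k)) :
    BruhatLE x w := by
  rw [bruhatLE_iff] at h ⊢
  intro i j
  rcases eq_or_ne j (k + 1) with rfl | hj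
  swap
  · rw [← permRank_mul_sgen_of_ne w k hj i]
    exact h i j
  -- Column `k + 1` is squeezed between columns `k` and `k + 2`, where `w` and `w * sgen k` agree.
  have hw₀ := permRank_mul_sgen_of_ne w k (j := k) (by omega) i
  have hw₂ := permRank_mul_sgen_of_ne w k (j := k + 1 + 1) (by omega) i
  have w₁ := permRank_succ w i k.castSucc
  have w₂ := permRank_succ w i k.succ
  have ws₁ := permRank_succ (w * sgen k) i k.castSucc
  have x₁ := permRank_succ x i k.castSucc
  have x₂ := permRank_succ x i k.succ
  have h₀ := h i k
  have h₂ := h i (k + 1 + 1)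
  simp only [Fin.val_castSucc, Fin.val_succ, mul_sgen_apply_castSucc] at *
  rw [Fin.lt_def] at hx
  split_ifs at * <;> omega

lemma BruhatLE.lift {x w : Perm (Fin (n + 1))} {k : Fin n} (h : BruhatLE x (w * sgen k)) :
    BruhatLE (if x k.succ < x k.castSucc then x * sgen k else x) w := by
  split_ifs with hx
  · refine BruhatLE.of_bruhatLE_mul_sgen ?_ ((bruhatLE_mul_sgen_of_gt hx).trans h)
    rwa [mul_sgen_apply_castSucc, mul_sgen_apply_succ]
  · exact h.of_bruhatLE_mul_sgen ((not_lt.1 hx).lt_of_ne (apply_castSucc_ne_apply_succ x k))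

end Bruhat

section Demazure

open Equiv

variable {n : ℕ}

lemma wordProd_cons (i : Fin n) (l : List (Fin n)) : wordProd (i :: l) = sgen i * wordProd l :=
  List.prod_cons

lemma wordProd_append_singleton (l : List (Fin n)) (i : Fin n) :
    wordProd (l ++ [i]) = wordProd l * sgen i := by
  simp [wordProd]

lemma len_wordProd_le (l : List (Fin n)) : len (wordProd l) ≤ l.length := by
  induction l with
  | nil => simpa [wordProd, len] using fun _ _ h => le_of_lt h
  | cons i l ih =>
    rw [wordProd_cons, List.length_cons]
    exact (len_sgen_mul_le _ i).trans (Nat.add_le_add_right ih 1)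

lemma IsReducedWord.demazure_eq {l : List (Fin n)} {w : Perm (Fin (n + 1))}
    (h : IsReducedWord l w) : demazure l = w := by
  obtain ⟨rfl, hlen⟩ := h
  induction l with
  | nil => rfl
  | cons i l ih =>
    have hle := len_wordProd_le l
    have hmul := len_sgen_mul_le (wordProd l) i
    rw [wordProd_cons, List.length_cons] at *
    rw [demazure, ih (by omega), if_pos (by omega)]

lemma demazure_cons_of_eq_inv_mul_longest (i : Fin n) {m : List (Fin n)}
    {x : Perm (Fin (n + 1))} (hm : demazure m = x⁻¹ * longest n) :
    demazure (i :: m) = (if x i.succ < x i.castSucc then x * sgen i else x)⁻¹ * longest n := by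
  have hmul : sgen i * (x⁻¹ * longest n) = (x * sgen i)⁻¹ * longest n := by
    rw [mul_inv_rev, sgen_inv, mul_assoc]
  have hx := len_inv_mul_longest_add_len x
  have hxs := len_inv_mul_longest_add_len (x * sgen i)
  have hcond : len ((x * sgen i)⁻¹ * longest n) > len (x⁻¹ * longest n) ↔
      x i.succ < x i.castSucc := by
    rw [← len_mul_sgen_lt_iff]
    omega
  rw [demazure, hm, hmul]
  split_ifs <;> first | rfl | tauto

theorem demazure_append_eq_longest {l m : List (Fin n)} {x : Perm (Fin (n + 1))}
    (hx : BruhatLE x (wordProd l)) (hm : demazure m = x⁻¹ * longest n) :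
    demazure (l ++ m) = longest n := by
  induction l using List.reverseRecOn generalizing x m with
  | nil => rwa [eq_one_of_bruhatLE_one hx, inv_one, one_mul] at hm
  | append_singleton l i ih =>
    rw [wordProd_append_singleton] at hx
    rw [List.append_assoc, List.singleton_append]
    exact ih hx.lift (demazure_cons_of_eq_inv_mul_longest i hm)

end Demazure

/-- If `u ≤ w` in Bruhat order, `lw` is a reduced word for `w` and `lu` is a reduced
word for `u⁻¹ w₀`, then the Demazure product of the concatenated word equals `w₀`. -/
theorem stmt1 {n : ℕ} (u w : Equiv.Perm (Fin (n + 1))) (huw : BruhatLE u w)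
    (lw lu : List (Fin n)) (hw : IsReducedWord lw w)
    (hu : IsReducedWord lu (u⁻¹ * longest n)) :
    demazure (lw ++ lu) = longest n :=
  demazure_append_eq_longest (hw.1 ▸ huw) hu.demazure_eq
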